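/- Let (E,ℒ) be a labeled graph satisfying the standing assumptions with ℰ the smallest normal accommodating set, and let {s_a, p_A} be a representation of (E,ℒ,ℰ) in a C*-algebra. Let [v]_l be a generalized vertex, A ∈ ℰ, and δ₁,…,δ_m ∈ ℒ*(E) paths such that s_{δ_i}* s_{δ_j} = 0 whenever i ≠ j and A ⊆ ∪_{i=1}^m r([v]_l, δ_i). Then there is a partial isometry w in the C*-algebra with w*w = p_A and ww* ≤ p_{[v]_l}. In particular, if p_A is an infinite projection then p_{[v]_l} is an infinite projection. -/

import Mathlib

/-!
Disjointify the cover: `Dᵢ = (A ∩ r([v]_l, δᵢ)) \ ⋃_{j<i} (A ∩ r([v]_l, δⱼ))` lies in `ℰ`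
(receiver set-finiteness puts `[v]_l` itself in `ℰ`), and `A` is the disjoint union of the `Dᵢ`.
For `w = ∑ᵢ s_{δᵢ} p_{Dᵢ}` the orthogonality `s_{δᵢ}* s_{δⱼ} = 0` kills the cross terms, so
`w* w = ∑ᵢ p_{Dᵢ} = p_A`, while `p_{[v]_l} s_{δᵢ} = s_{δᵢ} p_{r([v]_l, δᵢ)}` gives
`p_{[v]_l} w = w`, i.e. `w w* ≤ p_{[v]_l}`. Infiniteness of `p_A` then passes to the
Murray–von Neumann equivalent `w w*` and up to the larger projection `p_{[v]_l}`.
-/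

/-- The `n`-fold concatenation (power) `w^n` of a finite word `w`. -/
def wpow {Λ : Type*} (w : List Λ) (n : ℕ) : List Λ := (List.replicate n w).flatten

/-- The finite word `x_{[1,n]}` formed by the first `n` letters of an infinite word `x`. -/
def wordPrefix {Λ : Type*} (x : ℕ → Λ) (n : ℕ) : List Λ := (List.range n).map x

/-- A labeled graph `(E, ℒ)`: a directed graph with vertex set `V` and edge type `Edge`
(with range and source maps), together with a surjective labeling map `lbl` onto the
alphabet `Λ`. -/
structure LabeledGraph (V : Type*) (Λ : Type*) where
  Edge : Type*
  src : Edge → V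
  rng : Edge → V
  lbl : Edge → Λ
  lbl_surjective : Function.Surjective lbl

namespace LabeledGraph

variable {V : Type*} {Λ : Type*}

/-- `G.PathLabel u w α` holds iff there is a finite path `λ` of length `≥ 1` in the graph
with source `u`, range `w` and label word `ℒ(λ) = α`. -/
inductive PathLabel (G : LabeledGraph V Λ) : V → V → List Λ → Prop
  | single (e : G.Edge) : PathLabel G (G.src e) (G.rng e) [G.lbl e]
  | cons (e : G.Edge) {w : V} {α : List Λ} :
      PathLabel G (G.rng e) w α → PathLabel G (G.src e) w (G.lbl e :: α)

variable (G : LabeledGraph V Λ)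

/-- `α ∈ ℒ*(E)`: `α` is the label of some path of length `≥ 1`. -/
def IsLabel (α : List Λ) : Prop := ∃ u w, G.PathLabel u w α

/-- The relative range `r(A, α)` of `α` with respect to `A`. -/
def rel (A : Set V) (α : List Λ) : Set V := {w | ∃ u ∈ A, G.PathLabel u w α}

/-- `r(α) = r(E⁰, α)`. -/
def range' (α : List Λ) : Set V := G.rel Set.univ α

/-- `s(α)`: the set of sources of paths labeled `α`. -/
def srcSet (α : List Λ) : Set V := {u | ∃ w, G.PathLabel u w α}

/-- `ℒ(AEⁿ)`: labels of paths of length `n` with source in `A`. -/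
def lblFrom (A : Set V) (n : ℕ) : Set (List Λ) :=
  {α | α.length = n ∧ ∃ u ∈ A, ∃ w, G.PathLabel u w α}

/-- `ℒ(AE^{≥1})`: labels of paths of length `≥ 1` with source in `A`. -/
def lblFromGe (A : Set V) : Set (List Λ) := {α | ∃ u ∈ A, ∃ w, G.PathLabel u w α}

/-- `ℒ(EⁿA)`: labels of paths of length `n` with range in `A`. -/
def lblTo (A : Set V) (n : ℕ) : Set (List Λ) :=
  {α | α.length = n ∧ ∃ u, ∃ w ∈ A, G.PathLabel u w α}

/-- The generalized vertex `[v]_l`: the set of vertices `w` receiving at least one edge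
such that `ℒ(E^k w) = ℒ(E^k v)` for all `1 ≤ k ≤ l`. -/
def gv (v : V) (l : ℕ) : Set V :=
  {w | (∃ e : G.Edge, G.rng e = w) ∧
    ∀ k : ℕ, 1 ≤ k → k ≤ l → G.lblTo {w} k = G.lblTo {v} k}

/-- Membership in `ℰ`, the smallest collection of subsets of `E⁰` containing all ranges
`r(α)` and closed under relative ranges, finite intersections, finite unions and
relative complements (the smallest normal accommodating set). -/
inductive memE : Set V → Prop
  | empty : memE ∅
  | range (α : List Λ) : α ≠ [] → memE (G.range' α)
  | relRange {A : Set V} (α : List Λ) : α ≠ [] → memE A → memE (G.rel A α)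
  | inter {A C : Set V} : memE A → memE C → memE (A ∩ C)
  | union {A C : Set V} : memE A → memE C → memE (A ∪ C)
  | diff {A C : Set V} : memE A → memE C → memE (A \ C)

/-- The standing assumptions on the labeled space `(E, ℒ, ℰ)`: the graph has no sinks and
the labeled space is weakly left-resolving, set-finite and receiver set-finite. -/
structure Standing : Prop where
  no_sinks : ∀ u : V, ∃ e : G.Edge, G.src e = u
  weakly_left_resolving : ∀ A C : Set V, G.memE A → G.memE C →
    ∀ α : List Λ, α ≠ [] → G.rel (A ∩ C) α = G.rel A α ∩ G.rel C α
  set_finite : ∀ A : Set V, G.memE A → ∀ k : ℕ, 1 ≤ k → (G.lblFrom A k).Finite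
  receiver_set_finite : ∀ A : Set V, G.memE A → ∀ k : ℕ, 1 ≤ k → (G.lblTo A k).Finite

/-- `α` is agreeable for `[v]_l` (the condition only depends on `l`):
`α = βα' = α'γ` with `α', β, γ ∈ ℒ*(E)` and `|β| = |γ| ≤ l`. -/
def Agreeable (l : ℕ) (α : List Λ) : Prop :=
  ∃ α' β γ : List Λ, G.IsLabel α' ∧ G.IsLabel β ∧ G.IsLabel γ ∧
    β.length = γ.length ∧ β.length ≤ l ∧ α = β ++ α' ∧ α = α' ++ γ

/-- `α` (a path with `s(α) ∩ [v]_l ≠ ∅`) is disagreeable for `[v]_l`. -/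
def DisagreeableFor (v : V) (l : ℕ) (α : List Λ) : Prop :=
  (G.srcSet α ∩ G.gv v l).Nonempty ∧ ¬ G.Agreeable l α

/-- The generalized vertex `[v]_l` is disagreeable: there is `N ≥ 1` such that for every
`n > N` there is a path in `ℒ(E^{≥n})` which is disagreeable for `[v]_l`. -/
def DisagreeableGV (v : V) (l : ℕ) : Prop :=
  ∃ N : ℕ, 1 ≤ N ∧ ∀ n : ℕ, N < n →
    ∃ α : List Λ, n ≤ α.length ∧ G.DisagreeableFor v l α

/-- The labeled space `(E, ℒ, ℰ)` is disagreeable. -/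
def Disagreeable : Prop :=
  ∀ v : V, ∃ L : ℕ, 1 ≤ L ∧ ∀ l : ℕ, L ≤ l → G.DisagreeableGV v l

/-- `(α, A)` is a loop: `A ∈ ℰ` is nonempty, `α ∈ ℒ*(E)` and `A ⊆ r(A, α)`. -/
def IsLoop (α : List Λ) (A : Set V) : Prop :=
  α ≠ [] ∧ G.memE A ∧ A.Nonempty ∧ A ⊆ G.rel A α

/-- The loop `(α, A)` has an exit: either (i) there is `β ∈ ℒ(AE^{|α|})` with `β ≠ α` and
`r(A, β) ≠ ∅`, or (ii) `A ⊊ r(A, α)`. -/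
def HasExit (α : List Λ) (A : Set V) : Prop :=
  (∃ β : List Λ, β ∈ G.lblFrom A α.length ∧ β ≠ α ∧ (G.rel A β).Nonempty) ∨
    A ⊂ G.rel A α

/-- `A ∈ ℰ` is minimal: `A ≠ ∅` and `A ∩ C ∈ {A, ∅}` for every `C ∈ ℰ`. -/
def MinimalSet (A : Set V) : Prop :=
  G.memE A ∧ A.Nonempty ∧ ∀ C : Set V, G.memE C → A ∩ C = A ∨ A ∩ C = ∅

/-- A set `Bset ⊆ E⁰` connects to a loop: there are a loop `(α, A)` and finitely many
paths `δ₁, …, δ_m ∈ ℒ*(E)`, none of which is an initial path of another, with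
`A ⊆ ∪ᵢ r(Bset, δᵢ)`. -/
def ConnectsToLoop (Bset : Set V) : Prop :=
  ∃ (α : List Λ) (A : Set V), G.IsLoop α A ∧
    ∃ (m : ℕ) (δ : Fin m → List Λ), (∀ i, G.IsLabel (δ i)) ∧
      (∀ i j, i ≠ j → ¬ (δ i <+: δ j)) ∧ A ⊆ ⋃ i, G.rel Bset (δ i)

/-- Every vertex connects to a loop: every generalized vertex `[v]_l` connects to a loop. -/
def EveryVertexConnectsToLoop : Prop :=
  ∀ (v : V) (l : ℕ), 1 ≤ l → (∃ e : G.Edge, G.rng e = v) →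
    G.ConnectsToLoop (G.gv v l)

/-- The labeled space `(E, ℒ, ℰ)` is strongly cofinal. -/
def StronglyCofinal : Prop :=
  ∀ x : ℕ → Λ, (∀ n : ℕ, 1 ≤ n → G.IsLabel (wordPrefix x n)) →
    ∀ (v : V) (l : ℕ), (∃ e : G.Edge, G.rng e = v) → 1 ≤ l →
      ∃ N : ℕ, 1 ≤ N ∧ ∃ (m : ℕ) (lam : Fin m → List Λ),
        (∀ i, G.IsLabel (lam i)) ∧
        G.range' (wordPrefix x N) ⊆ ⋃ i, G.rel (G.gv v l) (lam i)

/-- A subset `H ⊆ ℰ` is hereditary: it is closed under finite unions, relative ranges,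
and subsets belonging to `ℰ`. -/
def IsHereditary (H : Set (Set V)) : Prop :=
  (∀ A ∈ H, G.memE A) ∧
  (∀ A ∈ H, ∀ C ∈ H, A ∪ C ∈ H) ∧
  (∀ A ∈ H, ∀ β : List Λ, G.IsLabel β → G.rel A β ∈ H) ∧
  (∀ A ∈ H, ∀ C : Set V, G.memE C → C ⊆ A → C ∈ H)

/-- A subset `H ⊆ ℰ` is saturated: every `A ∈ ℰ` with `r(A, β) ∈ H` for all
`β ∈ ℒ*(E)` belongs to `H`. -/
def IsSaturated (H : Set (Set V)) : Prop :=
  ∀ A : Set V, G.memE A → (∀ β : List Λ, G.IsLabel β → G.rel A β ∈ H) → A ∈ H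

end LabeledGraph

namespace LabeledGraph

variable {V : Type*} {Λ : Type*}

/-- A representation of the labeled space `(E, ℒ, ℰ)` in a C*-algebra `B`: a family of
projections `p A` (for `A ∈ ℰ`) and partial isometries `s a` (for letters `a`)
satisfying the defining relations (i)–(iv). -/
structure Representation (G : LabeledGraph V Λ) (B : Type*)
    [NonUnitalCStarAlgebra B] where
  p : Set V → B
  s : Λ → B
  p_selfAdjoint : ∀ A : Set V, G.memE A → IsSelfAdjoint (p A)
  p_idem : ∀ A : Set V, G.memE A → p A * p A = p A
  p_empty : p ∅ = 0
  p_inter : ∀ A C : Set V, G.memE A → G.memE C → p (A ∩ C) = p A * p C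
  p_union : ∀ A C : Set V, G.memE A → G.memE C →
    p (A ∪ C) = p A + p C - p (A ∩ C)
  p_mul_s : ∀ A : Set V, G.memE A → ∀ a : Λ, p A * s a = s a * p (G.rel A [a])
  star_s_mul_s : ∀ a : Λ, star (s a) * s a = p (G.range' [a])
  star_s_mul_s_orth : ∀ a b : Λ, a ≠ b → star (s a) * s b = 0
  cuntz_krieger : ∀ A : Set V, G.memE A → ∀ F : Finset Λ,
    (F : Set Λ) = {a : Λ | [a] ∈ G.lblFrom A 1} →
    p A = ∑ a ∈ F, s a * p (G.rel A [a]) * star (s a)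

/-- `s_α = s_{a₁} ⋯ s_{aₙ}` for a word `α = a₁ ⋯ aₙ` (defined as `0` on the empty word). -/
def Representation.sWord {G : LabeledGraph V Λ} {B : Type*} [NonUnitalCStarAlgebra B]
    (ρ : Representation G B) : List Λ → B
  | [] => 0
  | [a] => ρ.s a
  | a :: b :: α => ρ.s a * Representation.sWord ρ (b :: α)

/-- A gauge action for a representation: a point-norm continuous action of the circle
group `𝕋` by *-automorphisms fixing the projections `p A` and multiplying each `s a`
by the corresponding scalar. -/
structure Representation.GaugeAction {G : LabeledGraph V Λ} {B : Type*} [NonUnitalCStarAlgebra B]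
    (ρ : Representation G B) where
  γ : Circle → B ≃⋆ₐ[ℂ] B
  γ_mul : ∀ z w : Circle, γ (z * w) = (γ w).trans (γ z)
  γ_continuous : ∀ b : B, Continuous fun z : Circle => γ z b
  γ_s : ∀ (z : Circle) (a : Λ), γ z (ρ.s a) = (z : ℂ) • ρ.s a
  γ_p : ∀ (z : Circle) (A : Set V), G.memE A → γ z (ρ.p A) = ρ.p A

end LabeledGraph

/-- A projection in a C*-algebra. -/
def IsProjectionElem {B : Type*} [NonUnitalCStarAlgebra B] (q : B) : Prop :=
  IsSelfAdjoint q ∧ q * q = q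

/-- Murray–von Neumann equivalence of projections: `q = w* w` and `r = w w*` for some `w`. -/
def MvNEquiv {B : Type*} [NonUnitalCStarAlgebra B] (q r : B) : Prop :=
  ∃ w : B, star w * w = q ∧ w * star w = r

/-- An infinite projection: a projection `q` such that `w* w = q`, `w w* ≤ q` and
`w w* ≠ q` for some `w`. -/
def IsInfiniteProjection {B : Type*} [NonUnitalCStarAlgebra B] [PartialOrder B]
    [StarOrderedRing B] (q : B) : Prop :=
  IsProjectionElem q ∧ ∃ w : B, star w * w = q ∧ w * star w ≤ q ∧ w * star w ≠ q

theorem star_sum_mul_sum_of_orthogonal {R ι : Type*} [NonUnitalSemiring R] [StarRing R]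
    (s : Finset ι) (x : ι → R) (h : ∀ i ∈ s, ∀ j ∈ s, i ≠ j → star (x i) * x j = 0) :
    star (∑ i ∈ s, x i) * ∑ i ∈ s, x i = ∑ i ∈ s, star (x i) * x i := by
  rw [star_sum, Finset.sum_mul_sum]
  exact Finset.sum_congr rfl fun i hi =>
    Finset.sum_eq_single_of_mem i hi fun j hj hji => h i hi j hj (Ne.symm hji)

section CStarAlgebra

variable {B : Type*} [NonUnitalCStarAlgebra B]

theorem isProjectionElem_iff_isStarProjection {q : B} :
    IsProjectionElem q ↔ IsStarProjection q :=
  ⟨fun h => ⟨h.2, h.1⟩, fun h => ⟨h.2, h.1⟩⟩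

-- With `e = x⋆x` idempotent, `(xe - x)⋆(xe - x) = e³ - 2e² + e = 0`.
theorem mul_star_mul_self_of_isIdempotentElem {x : B} (h : IsIdempotentElem (star x * x)) :
    x * (star x * x) = x := by
  have key : star (x * (star x * x) - x) * (x * (star x * x) - x) = 0 := by
    have h' : star x * x * (star x * x) = star x * x := h
    calc _ = (star x * x) * ((star x * x) * (star x * x)) - (star x * x) * (star x * x)
          - (star x * x) * (star x * x) + star x * x := by
            simp only [star_sub, star_mul, star_star, mul_sub, sub_mul, mul_assoc]; abel
      _ = 0 := by rw [h', h', sub_self, zero_sub, neg_add_cancel]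
  exact sub_eq_zero.mp ((CStarRing.star_mul_self_eq_zero_iff _).mp key)

theorem IsStarProjection.mul_star_of_star_mul {x : B} (h : IsStarProjection (star x * x)) :
    IsStarProjection (x * star x) :=
  ⟨isIdempotentElem_star_mul_self_iff_isIdempotentElem_self_mul_star.mp h.isIdempotentElem,
    IsSelfAdjoint.mul_star_self x⟩

variable [PartialOrder B] [StarOrderedRing B]

theorem IsStarProjection.mul_eq_of_star_mul_self_eq_of_le {u q : B} (hq : IsStarProjection q)
    (hu : star u * u = q) (hle : u * star u ≤ q) : u * q = u ∧ q * u = u := by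
  have huq : u * q = u := hu ▸ mul_star_mul_self_of_isIdempotentElem (hu ▸ hq.isIdempotentElem)
  have hqu : q * (u * star u) = u * star u :=
    ((hu ▸ hq).mul_star_of_star_mul.le_iff_mul_eq_right hq).mp hle
  refine ⟨huq, ?_⟩
  calc q * u = q * (u * star u) * u := by rw [mul_assoc, mul_assoc, hu, huq]
    _ = u := by rw [hqu, mul_assoc, hu, huq]

theorem IsInfiniteProjection.of_mvnEquiv {p q : B} (hp : IsInfiniteProjection p)
    (hpq : MvNEquiv p q) : IsInfiniteProjection q := by
  obtain ⟨hpp, u, hu, hle, hne⟩ := hp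
  obtain ⟨x, rfl, rfl⟩ := hpq
  rw [isProjectionElem_iff_isStarProjection] at hpp
  have hxp : x * (star x * x) = x := mul_star_mul_self_of_isIdempotentElem hpp.isIdempotentElem
  obtain ⟨hup, hpu⟩ := hpp.mul_eq_of_star_mul_self_eq_of_le hu hle
  have huu : IsStarProjection (u * star u) := (hu ▸ hpp).mul_star_of_star_mul
  have hss : x * u * star x * star (x * u * star x) = x * (u * star u) * star x := by
    calc _ = x * (u * (star x * x) * star u) * star x := by
          simp only [star_mul, star_star, mul_assoc]
      _ = x * (u * star u) * star x := by rw [hup]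
  refine ⟨isProjectionElem_iff_isStarProjection.mpr hpp.mul_star_of_star_mul,
    x * u * star x, ?_, ?_, ?_⟩
  · calc star (x * u * star x) * (x * u * star x)
        = x * (star u * ((star x * x) * u)) * star x := by
          simp only [star_mul, star_star, mul_assoc]
      _ = x * star x := by rw [hpu, hu, hxp]
  · calc x * u * star x * star (x * u * star x) = x * (u * star u) * star x := hss
      _ ≤ x * (star x * x) * star x := star_right_conjugate_le_conjugate hle x
      _ = x * star x := by rw [hxp]
  · intro h
    apply hne
    calc u * star u = star x * x * (u * star u) * (star x * x) := by
          rw [(huu.le_iff_mul_eq_right hpp).mp hle, (huu.le_iff_mul_eq_left hpp).mp hle]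
      _ = star x * (x * (u * star u) * star x) * x := by simp only [mul_assoc]
      _ = star x * x * (star x * x) := by rw [← hss, h]; simp only [mul_assoc]
      _ = star x * x := hpp.isIdempotentElem

theorem IsInfiniteProjection.of_le {q P : B} (hq : IsInfiniteProjection q)
    (hP : IsProjectionElem P) (hqle : q ≤ P) : IsInfiniteProjection P := by
  obtain ⟨hqq, u, hu, hle, hne⟩ := hq
  rw [isProjectionElem_iff_isStarProjection] at hqq hP
  obtain ⟨huq, hqu⟩ := hqq.mul_eq_of_star_mul_self_eq_of_le hu hle
  have hPq : P * q = q := (hqq.le_iff_mul_eq_right hP).mp hqle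
  have hqP : q * P = q := (hqq.le_iff_mul_eq_left hP).mp hqle
  have huP : u * P = u := by rw [← huq, mul_assoc, hqP]
  have hPu : P * u = u := by rw [← hqu, ← mul_assoc, hPq]
  have hsu : star u * q = star u ∧ star u * P = star u := by
    constructor
    · simpa [star_mul, hqq.isSelfAdjoint.star_eq] using congr(star $hqu)
    · simpa [star_mul, hP.isSelfAdjoint.star_eq] using congr(star $hPu)
  have hus : q * star u = star u ∧ P * star u = star u := by
    constructor
    · simpa [star_mul, hqq.isSelfAdjoint.star_eq] using congr(star $huq)
    · simpa [star_mul, hP.isSelfAdjoint.star_eq] using congr(star $huP)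
  -- the witness acts as `u` on `q` and as the identity on `P - q`
  have hstar : star (u + (P - q)) = star u + (P - q) := by
    rw [star_add, star_sub, hP.isSelfAdjoint.star_eq, hqq.isSelfAdjoint.star_eq]
  have hrange : (u + (P - q)) * star (u + (P - q)) = u * star u + (P - q) := by
    rw [hstar]
    simp only [add_mul, mul_add, mul_sub, sub_mul, hP.isIdempotentElem.eq,
      hqq.isIdempotentElem.eq, hqP, hPq, huP, huq, hus.1, hus.2]
    abel
  refine ⟨isProjectionElem_iff_isStarProjection.mpr hP, u + (P - q), ?_, ?_, ?_⟩
  · rw [hstar]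
    simp only [add_mul, mul_add, mul_sub, sub_mul, hP.isIdempotentElem.eq,
      hqq.isIdempotentElem.eq, hqP, hPq, hu, hPu, hqu, hsu.1, hsu.2]
    abel
  · rw [hrange]
    calc u * star u + (P - q) ≤ q + (P - q) := by gcongr
      _ = P := add_sub_cancel q P
  · rw [hrange]
    intro h
    exact hne (by simpa using congr($h - (P - q)))

end CStarAlgebra

namespace LabeledGraph

variable {V Λ : Type*} (G : LabeledGraph V Λ)

theorem PathLabel.ne_nil {G : LabeledGraph V Λ} {u w : V} {α : List Λ}
    (h : G.PathLabel u w α) : α ≠ [] := by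
  cases h <;> simp

theorem PathLabel.exists_rng {G : LabeledGraph V Λ} {u w : V} {α : List Λ}
    (h : G.PathLabel u w α) : ∃ e : G.Edge, G.rng e = w := by
  induction h with
  | single e => exact ⟨e, rfl⟩
  | cons _ _ ih => exact ih

@[simp]
theorem rel_nil (A : Set V) : G.rel A [] = ∅ :=
  Set.eq_empty_of_forall_notMem fun _ ⟨_, _, h⟩ => h.ne_nil rfl

theorem rel_cons (A : Set V) (a : Λ) {β : List Λ} (hβ : β ≠ []) :
    G.rel A (a :: β) = G.rel (G.rel A [a]) β := by
  ext w
  constructor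
  · rintro ⟨u, hu, h⟩
    cases h with
    | single e => exact absurd rfl hβ
    | cons e h' => exact ⟨G.rng e, ⟨G.src e, hu, .single e⟩, h'⟩
  · rintro ⟨u', ⟨u, hu, h1⟩, h2⟩
    cases h1 with
    | single e => exact ⟨_, hu, .cons e h2⟩
    | cons e h' => exact absurd rfl h'.ne_nil

theorem rel_subset_range' (A : Set V) (α : List Λ) : G.rel A α ⊆ G.range' α :=
  fun _ ⟨u, _, h⟩ => ⟨u, trivial, h⟩

theorem mem_lblTo_singleton {w : V} {k : ℕ} {β : List Λ} :
    β ∈ G.lblTo {w} k ↔ β.length = k ∧ w ∈ G.range' β := by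
  simp [lblTo, range', rel]

theorem lblTo_mono {A C : Set V} (h : A ⊆ C) (k : ℕ) : G.lblTo A k ⊆ G.lblTo C k :=
  fun _ ⟨hlen, u, w, hw, hp⟩ => ⟨hlen, u, w, h hw, hp⟩

theorem memE_rel {A : Set V} (hA : G.memE A) (α : List Λ) : G.memE (G.rel A α) := by
  rcases eq_or_ne α [] with rfl | hα
  · simpa using memE.empty
  · exact .relRange α hα hA

theorem memE_range' (α : List Λ) : G.memE (G.range' α) := by
  rcases eq_or_ne α [] with rfl | hα
  · simpa [range'] using memE.empty
  · exact .range α hα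

theorem memE_biUnion {ι : Type*} {T : Set ι} (hT : T.Finite) {f : ι → Set V}
    (h : ∀ i ∈ T, G.memE (f i)) : G.memE (⋃ i ∈ T, f i) := by
  induction T, hT using Set.Finite.induction_on with
  | empty => simpa using memE.empty
  | @insert a T _ _ ih =>
    rw [Set.biUnion_insert]
    exact (h a (Set.mem_insert a T)).union (ih fun i hi => h i (Set.mem_insert_of_mem a hi))

theorem memE_inter_biInter {ι : Type*} {R : Set V} (hR : G.memE R) {T : Set ι} (hT : T.Finite)
    {f : ι → Set V} (h : ∀ i ∈ T, G.memE (R ∩ f i)) : G.memE (R ∩ ⋂ i ∈ T, f i) := by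
  induction T, hT using Set.Finite.induction_on with
  | empty => simpa using hR
  | @insert a T _ _ ih =>
    rw [Set.biInter_insert, Set.inter_inter_distrib_left]
    exact (h a (Set.mem_insert a T)).inter (ih fun i hi => h i (Set.mem_insert_of_mem a hi))

/-- Inside `R ∈ ℰ`, "`ℒ(Eᵏw) = S`" cuts out `⋂_{β ∈ S} r(β)` minus the ranges of the finitely
many other labels that reach it. -/
theorem memE_inter_setOf_lblTo_eq (hS : G.Standing) {R : Set V} (hR : G.memE R) {k : ℕ}
    (hk : 1 ≤ k) {S : Set (List Λ)} (hSfin : S.Finite) (hSk : ∀ β ∈ S, β.length = k) :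
    G.memE (R ∩ {w | G.lblTo {w} k = S}) := by
  set Z := R ∩ ⋂ β ∈ S, G.range' β
  have hZ : G.memE Z := G.memE_inter_biInter hR hSfin fun β _ => hR.inter (G.memE_range' β)
  have hX : (G.lblTo Z k \ S).Finite := (hS.receiver_set_finite Z hZ k hk).sdiff
  convert hZ.diff (G.memE_biUnion hX fun β _ => G.memE_range' β) using 1
  ext w
  simp only [Z, Set.mem_inter_iff, Set.mem_ofPred_eq, Set.mem_sdiff, Set.mem_iInter₂,
    Set.mem_iUnion₂]
  constructor
  · rintro ⟨hwR, rfl⟩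
    refine ⟨⟨hwR, fun β hβ => (G.mem_lblTo_singleton.mp hβ).2⟩, ?_⟩
    rintro ⟨β, ⟨⟨hlen, -⟩, hβS⟩, hwβ⟩
    exact hβS (G.mem_lblTo_singleton.mpr ⟨hlen, hwβ⟩)
  · rintro ⟨⟨hwR, hwS⟩, hwX⟩
    refine ⟨hwR, Set.ext fun β =>
      ⟨fun hβ => ?_, fun hβ => G.mem_lblTo_singleton.mpr ⟨hSk β hβ, hwS β hβ⟩⟩⟩
    by_contra hβS
    have hwZ : {w} ⊆ Z := Set.singleton_subset_iff.mpr ⟨hwR, Set.mem_iInter₂.mpr hwS⟩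
    exact hwX ⟨β, ⟨G.lblTo_mono hwZ k hβ, hβS⟩, (G.mem_lblTo_singleton.mp hβ).2⟩

theorem memE_gv (hS : G.Standing) {v : V} (hv : ∃ e : G.Edge, G.rng e = v) {l : ℕ}
    (hl : 1 ≤ l) : G.memE (G.gv v l) := by
  obtain ⟨e, rfl⟩ := hv
  set R := G.range' [G.lbl e]
  have hR : G.memE R := G.memE_range' _
  have hvR : G.rng e ∈ R := ⟨G.src e, trivial, .single e⟩
  have hgv : G.gv (G.rng e) l =
      R ∩ ⋂ k ∈ Set.Icc 1 l, {w | G.lblTo {w} k = G.lblTo {G.rng e} k} := by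
    ext w
    constructor
    · rintro ⟨-, hw⟩
      refine ⟨?_, Set.mem_iInter₂.mpr fun k hk => hw k hk.1 hk.2⟩
      have he : [G.lbl e] ∈ G.lblTo {w} 1 :=
        (hw 1 le_rfl hl).symm ▸ G.mem_lblTo_singleton.mpr ⟨rfl, hvR⟩
      exact (G.mem_lblTo_singleton.mp he).2
    · rintro ⟨⟨u, -, hp⟩, hw⟩
      exact ⟨hp.exists_rng, fun k hk1 hk2 => Set.mem_iInter₂.mp hw k ⟨hk1, hk2⟩⟩
  rw [hgv]
  refine G.memE_inter_biInter hR (Set.finite_Icc 1 l) fun k hk =>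
    G.memE_inter_setOf_lblTo_eq hS hR hk.1 ?_ fun β hβ => hβ.1
  exact (hS.receiver_set_finite R hR k hk.1).subset
    (G.lblTo_mono (Set.singleton_subset_iff.mpr hvR) k)

end LabeledGraph

namespace LabeledGraph.Representation

variable {V Λ : Type*} {G : LabeledGraph V Λ} {B : Type*} [NonUnitalCStarAlgebra B]
  (ρ : G.Representation B)

theorem isStarProjection_p {A : Set V} (hA : G.memE A) : IsStarProjection (ρ.p A) :=
  ⟨ρ.p_idem A hA, ρ.p_selfAdjoint A hA⟩

theorem p_mul_p_eq_left_of_subset {A C : Set V} (hA : G.memE A) (hC : G.memE C) (h : A ⊆ C) :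
    ρ.p A * ρ.p C = ρ.p A := by
  rw [← ρ.p_inter A C hA hC, Set.inter_eq_left.mpr h]

theorem p_mul_p_eq_right_of_subset {A C : Set V} (hA : G.memE A) (hC : G.memE C) (h : A ⊆ C) :
    ρ.p C * ρ.p A = ρ.p A := by
  rw [← ρ.p_inter C A hC hA, Set.inter_eq_right.mpr h]

theorem p_union_of_disjoint {A C : Set V} (hA : G.memE A) (hC : G.memE C) (h : Disjoint A C) :
    ρ.p (A ∪ C) = ρ.p A + ρ.p C := by
  rw [ρ.p_union A C hA hC, h.inter_eq, ρ.p_empty, sub_zero]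

open Function in
theorem p_biUnion_finset {ι : Type*} (s : Finset ι) {D : ι → Set V} (hD : ∀ i, G.memE (D i))
    (hdisj : Pairwise (Disjoint on D)) : ρ.p (⋃ i ∈ s, D i) = ∑ i ∈ s, ρ.p (D i) := by
  classical
  induction s using Finset.induction_on with
  | empty => simp [ρ.p_empty]
  | @insert a s ha ih =>
    have hdisj' : Disjoint (D a) (⋃ i ∈ s, D i) :=
      Set.disjoint_iUnion₂_right.mpr fun i hi => hdisj (ne_of_mem_of_not_mem hi ha).symm
    have hs : G.memE (⋃ i ∈ s, D i) := G.memE_biUnion s.finite_toSet fun i _ => hD i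
    rw [Finset.set_biUnion_insert, ρ.p_union_of_disjoint (hD a) hs hdisj', ih,
      Finset.sum_insert ha]

theorem p_mul_sWord {A : Set V} (hA : G.memE A) :
    ∀ α : List Λ, ρ.p A * ρ.sWord α = ρ.sWord α * ρ.p (G.rel A α)
  | [] => by simp [sWord]
  | [a] => ρ.p_mul_s A hA a
  | a :: b :: β => by
    have ih := p_mul_sWord (G.memE_rel hA [a]) (b :: β)
    calc ρ.p A * (ρ.s a * ρ.sWord (b :: β))
        = ρ.s a * (ρ.p (G.rel A [a]) * ρ.sWord (b :: β)) := by
          rw [← mul_assoc, ρ.p_mul_s A hA a, mul_assoc]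
      _ = ρ.s a * ρ.sWord (b :: β) * ρ.p (G.rel A (a :: b :: β)) := by
          rw [ih, G.rel_cons A a (List.cons_ne_nil b β), mul_assoc]

theorem star_sWord_mul_sWord : ∀ α : List Λ, star (ρ.sWord α) * ρ.sWord α = ρ.p (G.range' α)
  | [] => by simp [sWord, range', ρ.p_empty]
  | [a] => ρ.star_s_mul_s a
  | a :: b :: β => by
    have hsub := G.rel_subset_range' (G.range' [a]) (b :: β)
    calc star (ρ.s a * ρ.sWord (b :: β)) * (ρ.s a * ρ.sWord (b :: β))
        = star (ρ.sWord (b :: β)) * (ρ.p (G.range' [a]) * ρ.sWord (b :: β)) := by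
          rw [← ρ.star_s_mul_s a]; simp only [star_mul, mul_assoc]
      _ = ρ.p (G.range' (b :: β)) * ρ.p (G.rel (G.range' [a]) (b :: β)) := by
          rw [ρ.p_mul_sWord (G.memE_range' [a]), ← mul_assoc, star_sWord_mul_sWord]
      _ = ρ.p (G.range' (a :: b :: β)) := by
          rw [ρ.p_mul_p_eq_right_of_subset (G.memE_rel (G.memE_range' _) _)
            (G.memE_range' _) hsub]
          exact congrArg ρ.p (G.rel_cons _ a (List.cons_ne_nil b β)).symm

theorem star_mul_self_sWord_mul_p {α : List Λ} {D : Set V} (hD : G.memE D)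
    (h : D ⊆ G.range' α) : star (ρ.sWord α * ρ.p D) * (ρ.sWord α * ρ.p D) = ρ.p D := by
  calc star (ρ.sWord α * ρ.p D) * (ρ.sWord α * ρ.p D)
      = ρ.p D * (star (ρ.sWord α) * ρ.sWord α) * ρ.p D := by
        rw [star_mul, (ρ.p_selfAdjoint D hD).star_eq]; simp only [mul_assoc]
    _ = ρ.p D := by
        rw [star_sWord_mul_sWord, ρ.p_mul_p_eq_left_of_subset hD (G.memE_range' α) h,
          ρ.p_idem D hD]

theorem p_mul_sWord_mul_p {α : List Λ} {C D : Set V} (hC : G.memE C) (hD : G.memE D)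
    (h : D ⊆ G.rel C α) : ρ.p C * (ρ.sWord α * ρ.p D) = ρ.sWord α * ρ.p D := by
  rw [← mul_assoc, ρ.p_mul_sWord hC, mul_assoc,
    ρ.p_mul_p_eq_right_of_subset hD (G.memE_rel hC α) h]

theorem exists_partialIsometry_of_subset_iUnion_rel [PartialOrder B] [StarOrderedRing B]
    {A C : Set V} (hA : G.memE A) (hC : G.memE C) {m : ℕ} (δ : Fin m → List Λ)
    (horth : ∀ i j, i ≠ j → star (ρ.sWord (δ i)) * ρ.sWord (δ j) = 0)
    (hcover : A ⊆ ⋃ i, G.rel C (δ i)) :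
    ∃ w : B, star w * w = ρ.p A ∧ w * star w ≤ ρ.p C := by
  set D := disjointed fun i => A ∩ G.rel C (δ i)
  have hDE : ∀ i, G.memE (D i) := fun i =>
    disjointedRec (fun _ _ ht => ht.diff (hA.inter (G.memE_rel hC _)))
      (hA.inter (G.memE_rel hC (δ i)))
  have hDrel : ∀ i, D i ⊆ G.rel C (δ i) := fun i =>
    (disjointed_subset _ i).trans Set.inter_subset_right
  have hDA : ⋃ i, D i = A := by
    rw [iUnion_disjointed, ← Set.inter_iUnion, Set.inter_eq_left.mpr hcover]
  set w := ∑ i, ρ.sWord (δ i) * ρ.p (D i)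
  have hww : star w * w = ρ.p A := by
    rw [star_sum_mul_sum_of_orthogonal, ← hDA, Finset.sum_congr rfl fun i _ =>
      ρ.star_mul_self_sWord_mul_p (hDE i) ((hDrel i).trans (G.rel_subset_range' _ _))]
    · simpa [Set.iUnion_true, Finset.mem_univ] using
        (ρ.p_biUnion_finset Finset.univ hDE (disjoint_disjointed _)).symm
    · intro i _ j _ hij
      rw [star_mul, ← mul_assoc, mul_assoc _ (star _), horth i j hij, mul_zero, zero_mul]
  have hCw : ρ.p C * w = w := by
    rw [Finset.mul_sum]
    exact Finset.sum_congr rfl fun i _ => ρ.p_mul_sWord_mul_p hC (hDE i) (hDrel i)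
  have hwwC : ρ.p C * (w * star w) = w * star w := by rw [← mul_assoc, hCw]
  refine ⟨w, hww, ?_⟩
  exact ((hww ▸ ρ.isStarProjection_p hA).mul_star_of_star_mul.le_iff_mul_eq_right
    (ρ.isStarProjection_p hC)).mpr hwwC

end LabeledGraph.Representation

theorem stmt_7_general {V : Type*} {Λ : Type*}
    (G : LabeledGraph V Λ) (hS : G.Standing)
    {B : Type*} [NonUnitalCStarAlgebra B] [PartialOrder B] [StarOrderedRing B]
    (ρ : G.Representation B)
    (v : V) (hv : ∃ e : G.Edge, G.rng e = v) (l : ℕ) (hl : 1 ≤ l)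
    (A : Set V) (hA : G.memE A)
    (m : ℕ) (δ : Fin m → List Λ)
    (horth : ∀ i j, i ≠ j → star (ρ.sWord (δ i)) * ρ.sWord (δ j) = 0)
    (hcover : A ⊆ ⋃ i, G.rel (G.gv v l) (δ i)) :
    (∃ w : B, star w * w = ρ.p A ∧ w * star w ≤ ρ.p (G.gv v l)) ∧
    (IsInfiniteProjection (ρ.p A) → IsInfiniteProjection (ρ.p (G.gv v l))) := by
  have hgv : G.memE (G.gv v l) := G.memE_gv hS hv hl
  obtain ⟨w, hww, hle⟩ := ρ.exists_partialIsometry_of_subset_iUnion_rel hA hgv δ horth hcover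
  refine ⟨⟨w, hww, hle⟩, fun hinf => ?_⟩
  exact (hinf.of_mvnEquiv ⟨w, hww, rfl⟩).of_le
    (isProjectionElem_iff_isStarProjection.mpr (ρ.isStarProjection_p hgv)) hle

/-- Let `{s_a, p_A}` be a representation of `(E, ℒ, ℰ)` in a C*-algebra, `[v]_l` a
generalized vertex, `A ∈ ℰ`, and `δ₁, …, δ_m ∈ ℒ*(E)` with `s_{δ_i}* s_{δ_j} = 0` for
`i ≠ j` and `A ⊆ ∪ᵢ r([v]_l, δᵢ)`. Then there is a partial isometry `w` with
`w* w = p_A` and `w w* ≤ p_{[v]_l}`; in particular, if `p_A` is an infinite projection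
then so is `p_{[v]_l}`. -/
theorem stmt_7 {V : Type*} {Λ : Type*} [Countable V] [Countable Λ]
    (G : LabeledGraph V Λ) [Countable G.Edge] (hS : G.Standing)
    {B : Type*} [NonUnitalCStarAlgebra B] [PartialOrder B] [StarOrderedRing B]
    (ρ : G.Representation B)
    (v : V) (hv : ∃ e : G.Edge, G.rng e = v) (l : ℕ) (hl : 1 ≤ l)
    (A : Set V) (hA : G.memE A)
    (m : ℕ) (δ : Fin m → List Λ) (hδ : ∀ i, G.IsLabel (δ i))
    (horth : ∀ i j, i ≠ j → star (ρ.sWord (δ i)) * ρ.sWord (δ j) = 0)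
    (hcover : A ⊆ ⋃ i, G.rel (G.gv v l) (δ i)) :
    (∃ w : B, star w * w = ρ.p A ∧ w * star w ≤ ρ.p (G.gv v l)) ∧
    (IsInfiniteProjection (ρ.p A) → IsInfiniteProjection (ρ.p (G.gv v l))) :=
  stmt_7_general G hS ρ v hv l hl A hA m δ horth hcover
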